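/- Let n₁, …, n_N be unit vectors in ℝ³ and η ∈ [0,1], defining the qubit observables M_k with effects E^k_± = (1/2)(I ± η σ·n_k). For each sign vector X ∈ {+1,−1}^N let m_X := Σ_{k=1}^N X_k n_k. If η ≤ 2^N / (Σ_{X ∈ {+1,−1}^N} |m_X|), then the observables M₁, …, M_N are jointly measurable. -/

import Mathlib

/-!
With `S = ∑_X |m_X|`, take `E_X = (|m_X| / S) I + (η / 2^N) σ·m_X`. An operator `c I + σ·v` is
positive semidefinite iff `|v| ≤ c`, so `E_X ≥ 0` is exactly `η S ≤ 2^N`, and `I - E_X ≥ 0`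
follows from `|m_X| / S ≤ 1/2`, since `m_{-X} = -m_X`. The marginals are computed through the
characters `X ↦ X_k` of `{±1}^N`: `∑_X X_k |m_X| = 0` by the same symmetry, and
`∑_X X_k m_X = 2^N n_k` by orthogonality of the characters. If `S = 0` then `η = 0` and the
uniform effects `2^{-N} I` work.
-/

open Matrix ComplexOrder

noncomputable section

abbrev Mat2 := Matrix (Fin 2) (Fin 2) ℂ

/-- Pauli matrix σ₁. -/
def σ1 : Mat2 := !![0, 1; 1, 0]
/-- Pauli matrix σ₂. -/
def σ2 : Mat2 := !![0, -Complex.I; Complex.I, 0]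
/-- Pauli matrix σ₃. -/
def σ3 : Mat2 := !![1, 0; 0, -1]

/-- σ·a for a real 3-vector a. -/
def pauli (a : Fin 3 → ℝ) : Mat2 := (a 0 : ℂ) • σ1 + (a 1 : ℂ) • σ2 + (a 2 : ℂ) • σ3

/-- Euclidean inner product on ℝ³. -/
def dot3 (a b : Fin 3 → ℝ) : ℝ := a 0 * b 0 + a 1 * b 1 + a 2 * b 2

/-- Euclidean norm on ℝ³. -/
def norm3 (a : Fin 3 → ℝ) : ℝ := Real.sqrt (dot3 a a)

/-- A qubit effect: both `E` and `I - E` positive semidefinite. -/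
def IsEffect (E : Mat2) : Prop := E.PosSemidef ∧ (1 - E).PosSemidef

/-- A qubit density matrix. -/
def IsDensity (ρ : Mat2) : Prop := ρ.PosSemidef ∧ ρ.trace = 1

/-- E₊ = (1/2)(I + η σ·n). -/
def Epos (η : ℝ) (n : Fin 3 → ℝ) : Mat2 := (1/2 : ℂ) • (1 + (η : ℂ) • pauli n)
/-- E₋ = (1/2)(I - η σ·n). -/
def Eneg (η : ℝ) (n : Fin 3 → ℝ) : Mat2 := (1/2 : ℂ) • (1 - (η : ℂ) • pauli n)

/-- A pairwise joint measurement of the noisy spin-1/2 observables along nᵢ and nⱼ. -/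
def IsJointMmt (η : ℝ) (ni nj : Fin 3 → ℝ) (Gpp Gpm Gmp Gmm : Mat2) : Prop :=
  IsEffect Gpp ∧ IsEffect Gpm ∧ IsEffect Gmp ∧ IsEffect Gmm ∧
  Gpp + Gpm = Epos η ni ∧ Gmp + Gmm = Eneg η ni ∧
  Gpp + Gmp = Epos η nj ∧ Gpm + Gmm = Eneg η nj

/-- Average anticorrelation probability R₃(ρ), given the anticorrelation effects of the
three pairwise joint measurements. -/
def R3 (ρ G12pm G12mp G13pm G13mp G23pm G23mp : Mat2) : ℝ :=
  (1/3) * ((ρ * (G12pm + G12mp)).trace.re + (ρ * (G13pm + G13mp)).trace.re +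
    (ρ * (G23pm + G23mp)).trace.re)

/-- Parametric joint-measurement family. -/
def Gpp (η : ℝ) (ni nj : Fin 3 → ℝ) (α : ℝ) (a : Fin 3 → ℝ) : Mat2 :=
  (1/2 : ℂ) • (((α/2 : ℝ) : ℂ) • (1 : Mat2) + pauli ((1/2 : ℝ) • (η • (ni + nj) - a)))
def Gpm (η : ℝ) (ni nj : Fin 3 → ℝ) (α : ℝ) (a : Fin 3 → ℝ) : Mat2 :=
  (1/2 : ℂ) • (((1 - α/2 : ℝ) : ℂ) • (1 : Mat2) + pauli ((1/2 : ℝ) • (η • (ni - nj) + a)))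
def Gmp (η : ℝ) (ni nj : Fin 3 → ℝ) (α : ℝ) (a : Fin 3 → ℝ) : Mat2 :=
  (1/2 : ℂ) • (((1 - α/2 : ℝ) : ℂ) • (1 : Mat2) + pauli ((1/2 : ℝ) • (-(η • ni) + η • nj + a)))
def Gmm (η : ℝ) (ni nj : Fin 3 → ℝ) (α : ℝ) (a : Fin 3 → ℝ) : Mat2 :=
  (1/2 : ℂ) • (((α/2 : ℝ) : ℂ) • (1 : Mat2) + pauli ((1/2 : ℝ) • (-(η • (ni + nj)) - a)))

/-- Trine directions in the ZX plane. -/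
def tn1 : Fin 3 → ℝ := ![0, 0, 1]
def tn2 : Fin 3 → ℝ := ![Real.sqrt 3 / 2, 0, -(1/2)]
def tn3 : Fin 3 → ℝ := ![-(Real.sqrt 3 / 2), 0, -(1/2)]

/-- sign of a Boolean, as ±1. -/
def sgn (b : Bool) : ℝ := if b then 1 else -1

/-- m_X = Σₖ Xₖ nₖ. -/
def mvec {N : ℕ} (n : Fin N → Fin 3 → ℝ) (X : Fin N → Bool) : Fin 3 → ℝ :=
  ∑ k, sgn (X k) • n k

/-- Joint measurability of the N noisy qubit observables. -/
def JointlyMeasurable {N : ℕ} (η : ℝ) (n : Fin N → Fin 3 → ℝ) : Prop :=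
  ∃ E : (Fin N → Bool) → Mat2,
    (∀ X, IsEffect (E X)) ∧ (∑ X, E X) = 1 ∧
    (∀ k, ∑ X ∈ Finset.univ.filter (fun X => X k = true), E X = Epos η (n k)) ∧
    (∀ k, ∑ X ∈ Finset.univ.filter (fun X => X k = false), E X = Eneg η (n k))

lemma pauli_add (u v : Fin 3 → ℝ) : pauli (u + v) = pauli u + pauli v := by
  simp only [pauli, Pi.add_apply, Complex.ofReal_add, add_smul]; abel

lemma pauli_smul (r : ℝ) (v : Fin 3 → ℝ) : pauli (r • v) = (r : ℂ) • pauli v := by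
  simp only [pauli, Pi.smul_apply, smul_eq_mul, Complex.ofReal_mul, smul_add, mul_smul]

lemma pauli_neg (v : Fin 3 → ℝ) : pauli (-v) = -pauli v := by
  simpa using pauli_smul (-1) v

lemma pauli_sum {ι : Type*} (s : Finset ι) (f : ι → Fin 3 → ℝ) :
    pauli (∑ i ∈ s, f i) = ∑ i ∈ s, pauli (f i) :=
  map_sum (AddMonoidHom.mk' pauli pauli_add) f s

lemma norm3_eq_norm (v : Fin 3 → ℝ) : norm3 v = ‖WithLp.toLp 2 v‖ := by
  simp [norm3, dot3, EuclideanSpace.norm_eq, Fin.sum_univ_three, sq]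

lemma dot3_eq_inner (v w : Fin 3 → ℝ) :
    dot3 v w = inner ℝ (WithLp.toLp 2 v) (WithLp.toLp 2 w) := by
  simp [dot3, PiLp.inner_apply, Fin.sum_univ_three, mul_comm]

lemma norm3_nonneg (v : Fin 3 → ℝ) : 0 ≤ norm3 v := Real.sqrt_nonneg _

lemma norm3_neg (v : Fin 3 → ℝ) : norm3 (-v) = norm3 v := by
  simp [norm3_eq_norm]

lemma norm3_smul (r : ℝ) (v : Fin 3 → ℝ) : norm3 (r • v) = |r| * norm3 v := by
  simp [norm3_eq_norm, norm_smul]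

lemma norm3_zero : norm3 0 = 0 := by
  simp [norm3_eq_norm]

lemma neg_norm3_mul_le_dot3 (v w : Fin 3 → ℝ) : -(norm3 v * norm3 w) ≤ dot3 v w := by
  rw [norm3_eq_norm, norm3_eq_norm, dot3_eq_inner]
  exact neg_le_of_abs_le (abs_real_inner_le_norm _ _)

def qubitOp (c : ℝ) (v : Fin 3 → ℝ) : Mat2 := (c : ℂ) • 1 + pauli v

def blochVector (x : Fin 2 → ℂ) : Fin 3 → ℝ :=
  ![2 * (star (x 0) * x 1).re, 2 * (star (x 0) * x 1).im,
    Complex.normSq (x 0) - Complex.normSq (x 1)]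

lemma norm3_blochVector (x : Fin 2 → ℂ) :
    norm3 (blochVector x) = Complex.normSq (x 0) + Complex.normSq (x 1) := by
  have hdot : dot3 (blochVector x) (blochVector x) =
      (Complex.normSq (x 0) + Complex.normSq (x 1)) ^ 2 := by
    simp [dot3, blochVector, Complex.normSq_apply]
    ring
  rw [norm3, hdot, Real.sqrt_sq (add_nonneg (Complex.normSq_nonneg _) (Complex.normSq_nonneg _))]

lemma dotProduct_qubitOp_mulVec (c : ℝ) (v : Fin 3 → ℝ) (x : Fin 2 → ℂ) :
    star x ⬝ᵥ (qubitOp c v *ᵥ x) =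
      ((c * (Complex.normSq (x 0) + Complex.normSq (x 1)) + dot3 v (blochVector x) : ℝ) : ℂ) := by
  apply Complex.ext <;>
  simp [qubitOp, pauli, σ1, σ2, σ3, dotProduct, Matrix.mulVec, Fin.sum_univ_two, Matrix.one_apply,
    dot3, blochVector, Complex.normSq_apply] <;> ring

lemma isHermitian_qubitOp (c : ℝ) (v : Fin 3 → ℝ) : (qubitOp c v).IsHermitian := by
  ext i j
  fin_cases i <;> fin_cases j <;>
    simp [qubitOp, pauli, σ1, σ2, σ3, Matrix.conjTranspose_apply]

lemma posSemidef_qubitOp {c : ℝ} {v : Fin 3 → ℝ} (h : norm3 v ≤ c) :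
    (qubitOp c v).PosSemidef := by
  refine .of_dotProduct_mulVec_nonneg (isHermitian_qubitOp c v) fun x => ?_
  rw [dotProduct_qubitOp_mulVec, Complex.zero_le_real]
  have hCS := neg_norm3_mul_le_dot3 v (blochVector x)
  rw [norm3_blochVector] at hCS
  have := mul_le_mul_of_nonneg_right h
    (add_nonneg (Complex.normSq_nonneg (x 0)) (Complex.normSq_nonneg (x 1)))
  linarith

lemma one_sub_qubitOp (c : ℝ) (v : Fin 3 → ℝ) : 1 - qubitOp c v = qubitOp (1 - c) (-v) := by
  rw [qubitOp, qubitOp, pauli_neg]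
  push_cast
  module

lemma isEffect_qubitOp {c : ℝ} {v : Fin 3 → ℝ} (h₀ : norm3 v ≤ c) (h₁ : norm3 v ≤ 1 - c) :
    IsEffect (qubitOp c v) :=
  ⟨posSemidef_qubitOp h₀, one_sub_qubitOp c v ▸ posSemidef_qubitOp (by rwa [norm3_neg])⟩

lemma sum_qubitOp {ι : Type*} (s : Finset ι) (c : ι → ℝ) (v : ι → Fin 3 → ℝ) :
    ∑ i ∈ s, qubitOp (c i) (v i) = qubitOp (∑ i ∈ s, c i) (∑ i ∈ s, v i) := by
  simp only [qubitOp, Finset.sum_add_distrib, pauli_sum, Complex.ofReal_sum, Finset.sum_smul]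

lemma Epos_eq_qubitOp (η : ℝ) (n : Fin 3 → ℝ) : Epos η n = qubitOp (1 / 2) ((η / 2) • n) := by
  rw [Epos, qubitOp, pauli_smul]
  push_cast
  module

lemma Eneg_eq_qubitOp (η : ℝ) (n : Fin 3 → ℝ) : Eneg η n = qubitOp (1 / 2) (-(η / 2) • n) := by
  rw [Eneg, qubitOp, pauli_smul]
  push_cast
  module

lemma qubitOp_one_zero : qubitOp 1 0 = 1 := by
  simp [qubitOp, pauli]

lemma sum_eq_zero_of_involutive_of_neg {ι M : Type*} [Fintype ι] [AddCommGroup M]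
    [IsAddTorsionFree M] {φ : ι → ι} (hφ : φ.Involutive) {f : ι → M}
    (hf : ∀ i, f (φ i) = -f i) : ∑ i, f i = 0 := by
  refine self_eq_neg.mp ?_
  calc ∑ i, f i = ∑ i, f (φ i) := (Equiv.sum_comp (hφ.toPerm φ) f).symm
    _ = -∑ i, f i := by simp only [hf, Finset.sum_neg_distrib]

lemma sgn_not (b : Bool) : sgn (!b) = -sgn b := by cases b <;> simp [sgn]

lemma sgn_mul_self (b : Bool) : sgn b * sgn b = 1 := by cases b <;> simp [sgn]

lemma sum_sgn_smul_eq_zero {N : ℕ} {M : Type*} [AddCommGroup M] [IsAddTorsionFree M]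
    [Module ℝ M] (f : (Fin N → Bool) → M) (hf : ∀ X, f (fun j => !X j) = f X) (k : Fin N) :
    ∑ X, sgn (X k) • f X = 0 :=
  sum_eq_zero_of_involutive_of_neg (φ := fun X j => !X j) (fun X => by simp)
    fun X => by simp [hf, sgn_not]

lemma sum_sgn_mul_sgn {N : ℕ} (j k : Fin N) :
    ∑ X : Fin N → Bool, sgn (X j) * sgn (X k) = if j = k then 2 ^ N else 0 := by
  split_ifs with hjk
  · simp [hjk, sgn_mul_self]
  · refine sum_eq_zero_of_involutive_of_neg (φ := fun X => Function.update X j (!X j))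
      (fun X => by simp) fun X => ?_
    simp [Function.update_of_ne (Ne.symm hjk), sgn_not]

lemma sum_sgn_smul_mvec {N : ℕ} (n : Fin N → Fin 3 → ℝ) (k : Fin N) :
    ∑ X : Fin N → Bool, sgn (X k) • mvec n X = (2 ^ N : ℝ) • n k := by
  simp only [mvec, Finset.smul_sum, smul_smul]
  rw [Finset.sum_comm]
  simp only [← Finset.sum_smul, sum_sgn_mul_sgn, ite_smul, zero_smul]
  simp

lemma mvec_not {N : ℕ} (n : Fin N → Fin 3 → ℝ) (X : Fin N → Bool) :
    mvec n (fun j => !X j) = -mvec n X := by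
  simp only [mvec, sgn_not, neg_smul, Finset.sum_neg_distrib]

lemma sum_mvec {N : ℕ} (n : Fin N → Fin 3 → ℝ) : ∑ X, mvec n X = 0 :=
  sum_eq_zero_of_involutive_of_neg (φ := fun X j => !X j) (fun X => by simp) (mvec_not n)

lemma two_mul_norm3_mvec_le {N : ℕ} (n : Fin N → Fin 3 → ℝ) (X : Fin N → Bool) :
    2 * norm3 (mvec n X) ≤ ∑ Y, norm3 (mvec n Y) := by
  by_cases hX : (fun j => !X j) = X
  · have hm : mvec n X = 0 := self_eq_neg.mp (by rw [← mvec_not, hX])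
    rw [hm, norm3_zero, mul_zero]
    exact Finset.sum_nonneg fun Y _ => norm3_nonneg _
  · calc 2 * norm3 (mvec n X) = ∑ Y ∈ {X, fun j => !X j}, norm3 (mvec n Y) := by
          rw [Finset.sum_pair (Ne.symm hX), mvec_not, norm3_neg, two_mul]
      _ ≤ ∑ Y, norm3 (mvec n Y) :=
          Finset.sum_le_sum_of_subset_of_nonneg (Finset.subset_univ _)
            fun Y _ _ => norm3_nonneg _

lemma sum_filter_eq_half_add {N : ℕ} {M : Type*} [AddCommGroup M] [Module ℝ M] (k : Fin N)
    (f : (Fin N → Bool) → M) (b : Bool) :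
    ∑ X with X k = b, f X = (1 / 2 : ℝ) • (∑ X, f X + sgn b • ∑ X, sgn (X k) • f X) := by
  rw [Finset.sum_filter, Finset.smul_sum, ← Finset.sum_add_distrib, Finset.smul_sum]
  refine Finset.sum_congr rfl fun X _ => ?_
  cases b <;> cases X k <;> simp [sgn] <;> module

lemma jointlyMeasurable_of_qubitOp {N : ℕ} {η : ℝ} {n : Fin N → Fin 3 → ℝ}
    (c : (Fin N → Bool) → ℝ) (v : (Fin N → Bool) → Fin 3 → ℝ)
    (hcv : ∀ X, norm3 (v X) ≤ c X ∧ norm3 (v X) ≤ 1 - c X)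
    (hc : ∑ X, c X = 1) (hv : ∑ X, v X = 0)
    (hc_sgn : ∀ k, ∑ X, sgn (X k) • c X = 0) (hv_sgn : ∀ k, ∑ X, sgn (X k) • v X = η • n k) :
    JointlyMeasurable η n := by
  refine ⟨fun X => qubitOp (c X) (v X), fun X => isEffect_qubitOp (hcv X).1 (hcv X).2, ?_,
    fun k => ?_, fun k => ?_⟩
  · rw [sum_qubitOp, hc, hv, qubitOp_one_zero]
  · rw [sum_qubitOp, sum_filter_eq_half_add k c, sum_filter_eq_half_add k v, hc, hv, hc_sgn,
      hv_sgn, Epos_eq_qubitOp]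
    congr 1 <;> simp only [sgn] <;> norm_num; module
  · rw [sum_qubitOp, sum_filter_eq_half_add k c, sum_filter_eq_half_add k v, hc, hv, hc_sgn,
      hv_sgn, Eneg_eq_qubitOp]
    congr 1 <;> simp only [sgn] <;> norm_num; module

lemma jointlyMeasurable_zero {N : ℕ} (n : Fin N → Fin 3 → ℝ) : JointlyMeasurable 0 n := by
  refine jointlyMeasurable_of_qubitOp (fun _ => 1 / 2 ^ N) 0 (fun X => ?_) ?_ (by simp)
    (sum_sgn_smul_eq_zero _ fun _ => rfl) (by simp)
  · rw [Pi.zero_apply, norm3_zero]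
    constructor
    · positivity
    · rw [sub_nonneg, div_le_one (by positivity)]
      exact one_le_pow₀ one_le_two
  · simp [Finset.card_univ]

lemma jointlyMeasurable_of_mul_sum_le {N : ℕ} (n : Fin N → Fin 3 → ℝ) {η : ℝ} (hη : 0 ≤ η)
    (hS : 0 < ∑ X, norm3 (mvec n X)) (h : η * ∑ X, norm3 (mvec n X) ≤ 2 ^ N) :
    JointlyMeasurable η n := by
  set S := ∑ X, norm3 (mvec n X)
  have hv : ∀ X, norm3 ((η / 2 ^ N) • mvec n X) ≤ norm3 (mvec n X) / S := fun X => by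
    rw [norm3_smul, abs_of_nonneg (by positivity), div_mul_eq_mul_div,
      div_le_div_iff₀ (by positivity) hS]
    nlinarith [mul_le_mul_of_nonneg_left h (norm3_nonneg (mvec n X))]
  have hc : ∀ X, norm3 (mvec n X) / S ≤ 1 - norm3 (mvec n X) / S := fun X => by
    rw [le_sub_iff_add_le, ← two_mul, mul_div_assoc', div_le_one hS]
    exact two_mul_norm3_mvec_le n X
  refine jointlyMeasurable_of_qubitOp _ _ (fun X => ⟨hv X, (hv X).trans (hc X)⟩) ?_ ?_
    (sum_sgn_smul_eq_zero _ fun X => by simp only [mvec_not, norm3_neg]) fun k => ?_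
  · rw [← Finset.sum_div, div_self hS.ne']
  · rw [← Finset.smul_sum, sum_mvec, smul_zero]
  · calc ∑ X, sgn (X k) • (η / 2 ^ N) • mvec n X
        = (η / 2 ^ N) • ∑ X, sgn (X k) • mvec n X := by
          rw [Finset.smul_sum]
          exact Finset.sum_congr rfl fun X _ => smul_comm _ _ _
      _ = η • n k := by
          rw [sum_sgn_smul_mvec, smul_smul, div_mul_cancel₀ _ (by positivity)]

theorem joint_measurability_sufficient_general {N : ℕ}
    (n : Fin N → Fin 3 → ℝ)
    (η : ℝ) (hη : η ∈ Set.Icc (0 : ℝ) 1)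
    (h : η ≤ 2^N / ∑ X : Fin N → Bool, norm3 (mvec n X)) :
    JointlyMeasurable η n := by
  rcases (Finset.sum_nonneg fun X _ => norm3_nonneg (mvec n X)).eq_or_lt with hS | hS
  · rw [← hS, div_zero] at h
    rw [le_antisymm h hη.1]
    exact jointlyMeasurable_zero n
  · exact jointlyMeasurable_of_mul_sum_le n hη.1 hS ((le_div_iff₀ hS).mp h)

/-- Sufficient condition for joint measurability of N noisy spin-1/2 qubit observables:
η ≤ 2^N / Σ_X |m_X|. -/
theorem joint_measurability_sufficient {N : ℕ}
    (n : Fin N → Fin 3 → ℝ) (hn : ∀ k, norm3 (n k) = 1)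
    (η : ℝ) (hη : η ∈ Set.Icc (0 : ℝ) 1)
    (h : η ≤ 2^N / ∑ X : Fin N → Bool, norm3 (mvec n X)) :
    JointlyMeasurable η n :=
  joint_measurability_sufficient_general n η hη h

end
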